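/- arXiv:2403.00970 — 2 statements merged into one kernel-verified Lean document; each statement's English description precedes it below -/
import Mathlib

section
/- The function N(ζ) = exp(ζ²) cos(πζ/2) is a Nussbaum-type function: limsup_{v→∞} (1/v)∫₀ᵛ N(ζ)dζ = +∞ and liminf_{v→∞} (1/v)∫₀ᵛ N(ζ)dζ = -∞. -/
open Filter MeasureTheory

noncomputable def nfAux (ζ : ℝ) : ℝ := Real.exp (ζ ^ 2) * Real.cos (Real.pi * ζ / 2)

lemma nfAux_cont : Continuous nfAux := by
  unfold nfAux; fun_prop

lemma nfAux_int (a b : ℝ) : IntervalIntegrable nfAux volume a b :=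
  nfAux_cont.intervalIntegrable a b

lemma exp_quad (x : ℝ) (hx : 0 ≤ x) : x ^ 2 / 4 ≤ Real.exp x := by
  have e : Real.exp x = Real.exp (x/2) * Real.exp (x/2) := by
    rw [← Real.exp_add]; ring_nf
  nlinarith [Real.add_one_le_exp (x/2), Real.exp_pos (x/2)]

lemma exp_dom (a b : ℝ) : ∀ᶠ x : ℝ in atTop, a * x + b < Real.exp x := by
  filter_upwards [eventually_ge_atTop (4*(|a|+|b|+1)), eventually_ge_atTop 1] with x h1 h2
  have hq := exp_quad x (by linarith)
  nlinarith [le_abs_self a, le_abs_self b, abs_nonneg a, abs_nonneg b,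
    mul_nonneg (sub_nonneg.2 h1) (show (0:ℝ) ≤ x by linarith)]

lemma cos_ge_sqrt (x : ℝ) (hx : |x| ≤ Real.pi / 4) : Real.sqrt 2 / 2 ≤ Real.cos x := by
  rw [← Real.cos_pi_div_four, ← Real.cos_abs x]
  exact Real.cos_le_cos_of_nonneg_of_le_pi (abs_nonneg x) (by linarith [Real.pi_pos]) hx

lemma cos_shiftP (n : ℕ) (ζ : ℝ) :
    Real.cos (Real.pi * ζ / 2) = Real.cos (Real.pi * (ζ - 4*n) / 2) := by
  rw [← Real.cos_add_int_mul_two_pi (Real.pi * (ζ - 4*n) / 2) n]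
  congr 1; push_cast; ring

lemma cos_shiftN (n : ℕ) (ζ : ℝ) :
    Real.cos (Real.pi * ζ / 2) = -Real.cos (Real.pi * (ζ - (4*n+2)) / 2) := by
  rw [← Real.cos_add_pi, ← Real.cos_add_int_mul_two_pi (Real.pi * (ζ - (4*n+2)) / 2 + Real.pi) n]
  congr 1; push_cast; ring

lemma tail_bound (b : ℝ) (hb : 0 ≤ b) :
    |∫ ζ in (0:ℝ)..b, nfAux ζ| ≤ b * Real.exp (b ^ 2) := by
  have h := intervalIntegral.norm_integral_le_of_norm_le_const
    (a := (0:ℝ)) (b := b) (C := Real.exp (b ^ 2)) (f := nfAux) ?_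
  · rw [Real.norm_eq_abs] at h
    calc |∫ ζ in (0:ℝ)..b, nfAux ζ| ≤ Real.exp (b ^ 2) * |b - 0| := h
      _ = b * Real.exp (b ^ 2) := by rw [sub_zero, abs_of_nonneg hb]; ring
  · intro x hx
    rw [Set.uIoc_of_le hb] at hx
    obtain ⟨hx1, hx2⟩ := hx
    rw [Real.norm_eq_abs]
    unfold nfAux
    rw [abs_mul, abs_of_pos (Real.exp_pos _)]
    calc Real.exp (x ^ 2) * |Real.cos (Real.pi * x / 2)| ≤ Real.exp (x ^ 2) * 1 :=
        mul_le_mul_of_nonneg_left (Real.abs_cos_le_one _) (Real.exp_pos _).le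
      _ = Real.exp (x ^ 2) := mul_one _
      _ ≤ Real.exp (b ^ 2) := Real.exp_le_exp.2 (by nlinarith)

lemma humpPos (n : ℕ) (hn : 1 ≤ n) :
    Real.sqrt 2 / 2 * Real.exp ((4*(n:ℝ) - 1/2) ^ 2) ≤
      ∫ ζ in (4*(n:ℝ)-1)..(4*(n:ℝ)+1), nfAux ζ := by
  have hn1 : (1:ℝ) ≤ n := by exact_mod_cast hn
  set m : ℝ := 4*(n:ℝ) with hm
  have hm4 : (4:ℝ) ≤ m := by rw [hm]; linarith
  have h1 : (∫ ζ in (m-1)..(m-1/2), nfAux ζ) + ∫ ζ in (m-1/2)..(m+1), nfAux ζ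
      = ∫ ζ in (m-1)..(m+1), nfAux ζ :=
    intervalIntegral.integral_add_adjacent_intervals (nfAux_int _ _) (nfAux_int _ _)
  have h2 : (∫ ζ in (m-1/2)..(m+1/2), nfAux ζ) + ∫ ζ in (m+1/2)..(m+1), nfAux ζ
      = ∫ ζ in (m-1/2)..(m+1), nfAux ζ :=
    intervalIntegral.integral_add_adjacent_intervals (nfAux_int _ _) (nfAux_int _ _)
  have hcos : ∀ ζ ∈ Set.Icc (m-1) (m+1), 0 ≤ Real.cos (Real.pi * ζ / 2) := by
    intro ζ hζ
    rw [cos_shiftP n ζ, ← hm]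
    apply Real.cos_nonneg_of_mem_Icc
    constructor <;> nlinarith [Real.pi_pos, hζ.1, hζ.2]
  have sideA : 0 ≤ ∫ ζ in (m-1)..(m-1/2), nfAux ζ := by
    apply intervalIntegral.integral_nonneg (by linarith)
    intro u hu
    exact mul_nonneg (Real.exp_pos _).le (hcos u ⟨by linarith [hu.1], by linarith [hu.2]⟩)
  have sideB : 0 ≤ ∫ ζ in (m+1/2)..(m+1), nfAux ζ := by
    apply intervalIntegral.integral_nonneg (by linarith)
    intro u hu
    exact mul_nonneg (Real.exp_pos _).le (hcos u ⟨by linarith [hu.1], by linarith [hu.2]⟩)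
  have mid : Real.sqrt 2 / 2 * Real.exp ((m - 1/2) ^ 2) ≤
      ∫ ζ in (m-1/2)..(m+1/2), nfAux ζ := by
    have hmono := intervalIntegral.integral_mono_on (a := m-1/2) (b := m+1/2)
      (f := fun _ => Real.sqrt 2 / 2 * Real.exp ((m - 1/2) ^ 2)) (g := nfAux)
      (μ := volume) (by linarith) (intervalIntegrable_const) (nfAux_int _ _) ?_
    · rw [intervalIntegral.integral_const, smul_eq_mul] at hmono
      calc Real.sqrt 2 / 2 * Real.exp ((m - 1/2) ^ 2)
          = (m + 1/2 - (m - 1/2)) * (Real.sqrt 2 / 2 * Real.exp ((m - 1/2) ^ 2)) := by ring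
        _ ≤ _ := hmono
    · intro ζ hζ
      have hc : Real.sqrt 2 / 2 ≤ Real.cos (Real.pi * ζ / 2) := by
        rw [cos_shiftP n ζ, ← hm]
        apply cos_ge_sqrt
        rw [abs_le]
        constructor <;> nlinarith [Real.pi_pos, hζ.1, hζ.2]
      have he : Real.exp ((m - 1/2) ^ 2) ≤ Real.exp (ζ ^ 2) :=
        Real.exp_le_exp.2 (by nlinarith [hζ.1, hζ.2])
      calc Real.sqrt 2 / 2 * Real.exp ((m - 1/2) ^ 2)
          ≤ Real.sqrt 2 / 2 * Real.exp (ζ ^ 2) :=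
            mul_le_mul_of_nonneg_left he (by positivity)
        _ ≤ Real.cos (Real.pi * ζ / 2) * Real.exp (ζ ^ 2) :=
            mul_le_mul_of_nonneg_right hc (Real.exp_pos _).le
        _ = nfAux ζ := by unfold nfAux; ring
  linarith

lemma humpNeg (n : ℕ) :
    (∫ ζ in (4*(n:ℝ)+1)..(4*(n:ℝ)+3), nfAux ζ) ≤
      -(Real.sqrt 2 / 2 * Real.exp ((4*(n:ℝ) + 3/2) ^ 2)) := by
  have hn0 : (0:ℝ) ≤ n := Nat.cast_nonneg n
  set m : ℝ := 4*(n:ℝ)+2 with hm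
  have hm2 : (2:ℝ) ≤ m := by rw [hm]; linarith
  have h1 : (∫ ζ in (m-1)..(m-1/2), nfAux ζ) + ∫ ζ in (m-1/2)..(m+1), nfAux ζ
      = ∫ ζ in (m-1)..(m+1), nfAux ζ :=
    intervalIntegral.integral_add_adjacent_intervals (nfAux_int _ _) (nfAux_int _ _)
  have h2 : (∫ ζ in (m-1/2)..(m+1/2), nfAux ζ) + ∫ ζ in (m+1/2)..(m+1), nfAux ζ
      = ∫ ζ in (m-1/2)..(m+1), nfAux ζ :=
    intervalIntegral.integral_add_adjacent_intervals (nfAux_int _ _) (nfAux_int _ _)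
  have hcos : ∀ ζ ∈ Set.Icc (m-1) (m+1), Real.cos (Real.pi * ζ / 2) ≤ 0 := by
    intro ζ hζ
    rw [cos_shiftN n ζ]
    simp only [neg_nonpos]
    have hmm : (4*(n:ℝ)+2) = m := hm.symm
    rw [hmm]
    apply Real.cos_nonneg_of_mem_Icc
    constructor <;> nlinarith [Real.pi_pos, hζ.1, hζ.2]
  have sideA : (∫ ζ in (m-1)..(m-1/2), nfAux ζ) ≤ 0 := by
    have h0 : 0 ≤ ∫ ζ in (m-1)..(m-1/2), -nfAux ζ := by
      apply intervalIntegral.integral_nonneg (by linarith)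
      intro u hu
      simp only [neg_nonneg]
      exact mul_nonpos_of_nonneg_of_nonpos (Real.exp_pos _).le
        (hcos u ⟨by linarith [hu.1], by linarith [hu.2]⟩)
    rw [intervalIntegral.integral_neg] at h0
    linarith
  have sideB : (∫ ζ in (m+1/2)..(m+1), nfAux ζ) ≤ 0 := by
    have h0 : 0 ≤ ∫ ζ in (m+1/2)..(m+1), -nfAux ζ := by
      apply intervalIntegral.integral_nonneg (by linarith)
      intro u hu
      simp only [neg_nonneg]
      exact mul_nonpos_of_nonneg_of_nonpos (Real.exp_pos _).le
        (hcos u ⟨by linarith [hu.1], by linarith [hu.2]⟩)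
    rw [intervalIntegral.integral_neg] at h0
    linarith
  have mid : (∫ ζ in (m-1/2)..(m+1/2), nfAux ζ) ≤
      -(Real.sqrt 2 / 2 * Real.exp ((m - 1/2) ^ 2)) := by
    have hmono := intervalIntegral.integral_mono_on (a := m-1/2) (b := m+1/2)
      (f := nfAux) (g := fun _ => -(Real.sqrt 2 / 2 * Real.exp ((m - 1/2) ^ 2)))
      (μ := volume) (by linarith) (nfAux_int _ _) (intervalIntegrable_const) ?_
    · rw [intervalIntegral.integral_const, smul_eq_mul] at hmono
      calc (∫ ζ in (m-1/2)..(m+1/2), nfAux ζ)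
          ≤ (m + 1/2 - (m - 1/2)) * -(Real.sqrt 2 / 2 * Real.exp ((m - 1/2) ^ 2)) := hmono
        _ = -(Real.sqrt 2 / 2 * Real.exp ((m - 1/2) ^ 2)) := by ring
    · intro ζ hζ
      have hc : Real.cos (Real.pi * ζ / 2) ≤ -(Real.sqrt 2 / 2) := by
        rw [cos_shiftN n ζ, neg_le_neg_iff]
        have hmm : (4*(n:ℝ)+2) = m := hm.symm
        rw [hmm]
        apply cos_ge_sqrt
        rw [abs_le]
        constructor <;> nlinarith [Real.pi_pos, hζ.1, hζ.2]
      have he : Real.exp ((m - 1/2) ^ 2) ≤ Real.exp (ζ ^ 2) :=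
        Real.exp_le_exp.2 (by nlinarith [hζ.1, hζ.2])
      have h0 : nfAux ζ ≤ Real.exp (ζ ^ 2) * -(Real.sqrt 2 / 2) := by
        unfold nfAux
        exact mul_le_mul_of_nonneg_left hc (Real.exp_pos _).le
      calc nfAux ζ ≤ Real.exp (ζ ^ 2) * -(Real.sqrt 2 / 2) := h0
        _ ≤ Real.exp ((m - 1/2) ^ 2) * -(Real.sqrt 2 / 2) := by
            apply mul_le_mul_of_nonpos_right he
            simp only [neg_nonpos]
            positivity
        _ = -(Real.sqrt 2 / 2 * Real.exp ((m - 1/2) ^ 2)) := by ring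
  have e1 : (4*(n:ℝ)+1) = m - 1 := by rw [hm]; ring
  have e2 : (4*(n:ℝ)+3) = m + 1 := by rw [hm]; ring
  have e3 : (4*(n:ℝ)+3/2) = m - 1/2 := by rw [hm]; ring
  rw [e1, e2, e3]
  linarith

lemma core_ineq (c : ℝ) : ∀ᶠ x : ℝ in atTop,
    |c| * (x + 2) + x * Real.exp (x ^ 2) < Real.sqrt 2 / 2 * Real.exp ((x + 1/2) ^ 2) := by
  filter_upwards [exp_dom (2*|c|+2) (4*|c|+1), eventually_ge_atTop 0] with x hx hx0
  have e1 : Real.exp ((x + 1/2) ^ 2) = Real.exp (x ^ 2) * Real.exp x * Real.exp (1/4 : ℝ) := by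
    rw [← Real.exp_add, ← Real.exp_add]; ring_nf
  have h2 : (1:ℝ) ≤ Real.exp (x ^ 2) := Real.one_le_exp (sq_nonneg x)
  have h3 : (1:ℝ) ≤ Real.exp (1/4 : ℝ) := Real.one_le_exp (by norm_num)
  have h4 : (1:ℝ) ≤ Real.sqrt 2 := by
    nlinarith [Real.sq_sqrt (by norm_num : (0:ℝ) ≤ 2), Real.sqrt_nonneg 2]
  have h5 := Real.exp_pos x
  have h6 := Real.exp_pos (x ^ 2)
  have hA : (1/2) * (Real.exp (x ^ 2) * Real.exp x) ≤
      Real.sqrt 2 / 2 * Real.exp ((x + 1/2) ^ 2) := by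
    rw [e1]
    have p : (0:ℝ) < Real.exp (x ^ 2) * Real.exp x := mul_pos h6 h5
    calc (1/2) * (Real.exp (x ^ 2) * Real.exp x)
        = (1/2) * (Real.exp (x ^ 2) * Real.exp x) * 1 := by ring
      _ ≤ Real.sqrt 2 / 2 * (Real.exp (x ^ 2) * Real.exp x) * Real.exp (1/4 : ℝ) :=
          mul_le_mul (mul_le_mul_of_nonneg_right (by linarith) p.le) h3 zero_le_one
            (by positivity)
      _ = Real.sqrt 2 / 2 * (Real.exp (x ^ 2) * Real.exp x * Real.exp (1/4 : ℝ)) := by ring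
  have hq0 : (0:ℝ) ≤ |c| * x + 2 * |c| :=
    add_nonneg (mul_nonneg (abs_nonneg c) hx0) (by positivity)
  have hB : |c| * (x + 2) + x * Real.exp (x ^ 2) <
      (1/2) * (Real.exp (x ^ 2) * Real.exp x) := by
    nlinarith [mul_lt_mul_of_pos_left hx (by positivity : (0:ℝ) < Real.exp (x ^ 2) / 2),
      mul_le_mul_of_nonneg_left h2 hq0]
  linarith

/-- The function `N(ζ) = exp(ζ²) cos(πζ/2)` is a Nussbaum-type function:
the averaged integral `(1/v)∫₀ᵛ N` has limsup `+∞` and liminf `-∞` as `v → ∞`. -/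
theorem stmt1 (N : ℝ → ℝ)
    (hN : ∀ ζ, N ζ = Real.exp (ζ ^ 2) * Real.cos (Real.pi * ζ / 2)) :
    (∀ c : ℝ, ∃ᶠ v in atTop, c < (1 / v) * ∫ ζ in (0:ℝ)..v, N ζ) ∧
    (∀ c : ℝ, ∃ᶠ v in atTop, (1 / v) * ∫ ζ in (0:ℝ)..v, N ζ < c) := by
  have hNe : N = nfAux := funext hN
  subst hNe
  constructor
  · intro c
    rw [frequently_atTop]
    intro b0
    obtain ⟨x0, hx0⟩ := eventually_atTop.1 (core_ineq c)
    obtain ⟨n, hn⟩ := exists_nat_ge (max (max x0 b0) 1)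
    have hn1 : (1:ℝ) ≤ n := le_trans (le_max_right _ _) hn
    have hnx : x0 ≤ (n:ℝ) := le_trans (le_trans (le_max_left _ _) (le_max_left _ _)) hn
    have hnb : b0 ≤ (n:ℝ) := le_trans (le_trans (le_max_right _ _) (le_max_left _ _)) hn
    have hnn : 1 ≤ n := by exact_mod_cast hn1
    refine ⟨4*(n:ℝ) + 1, by linarith, ?_⟩
    obtain ⟨x, hxdef⟩ : ∃ x : ℝ, x = 4*(n:ℝ) - 1 := ⟨_, rfl⟩
    have hv : (0:ℝ) < 4*(n:ℝ) + 1 := by linarith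
    rw [one_div, inv_mul_eq_div, lt_div_iff₀ hv]
    have hcore := hx0 x (by rw [hxdef]; linarith)
    have htail := tail_bound x (by rw [hxdef]; linarith)
    have hhump := humpPos n hnn
    have hE : (4*(n:ℝ) - 1/2) = x + 1/2 := by rw [hxdef]; ring
    have hI1 : (4*(n:ℝ)-1) = x := hxdef.symm
    rw [hE, hI1] at hhump
    have hsplit : (∫ ζ in (0:ℝ)..x, nfAux ζ) + (∫ ζ in x..(4*(n:ℝ)+1), nfAux ζ)
        = ∫ ζ in (0:ℝ)..(4*(n:ℝ)+1), nfAux ζ :=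
      intervalIntegral.integral_add_adjacent_intervals (nfAux_int _ _) (nfAux_int _ _)
    obtain ⟨habs1, habs2⟩ := abs_le.1 htail
    have hcv : c * (4*(n:ℝ)+1) ≤ |c| * (x + 2) := by
      have := mul_le_mul_of_nonneg_right (le_abs_self c) hv.le
      have hxv : 4*(n:ℝ)+1 = x + 2 := by rw [hxdef]; ring
      rw [hxv] at this ⊢
      exact this
    linarith
  · intro c
    rw [frequently_atTop]
    intro b0
    obtain ⟨x0, hx0⟩ := eventually_atTop.1 (core_ineq c)
    obtain ⟨n, hn⟩ := exists_nat_ge (max (max x0 b0) 1)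
    have hn1 : (1:ℝ) ≤ n := le_trans (le_max_right _ _) hn
    have hnx : x0 ≤ (n:ℝ) := le_trans (le_trans (le_max_left _ _) (le_max_left _ _)) hn
    have hnb : b0 ≤ (n:ℝ) := le_trans (le_trans (le_max_right _ _) (le_max_left _ _)) hn
    refine ⟨4*(n:ℝ) + 3, by linarith, ?_⟩
    obtain ⟨x, hxdef⟩ : ∃ x : ℝ, x = 4*(n:ℝ) + 1 := ⟨_, rfl⟩
    have hv : (0:ℝ) < 4*(n:ℝ) + 3 := by linarith
    rw [one_div, inv_mul_eq_div, div_lt_iff₀ hv]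
    have hcore := hx0 x (by rw [hxdef]; linarith)
    have htail := tail_bound x (by rw [hxdef]; linarith)
    have hhump := humpNeg n
    have hE : (4*(n:ℝ) + 3/2) = x + 1/2 := by rw [hxdef]; ring
    have hI1 : (4*(n:ℝ)+1) = x := hxdef.symm
    rw [hE, hI1] at hhump
    have hsplit : (∫ ζ in (0:ℝ)..x, nfAux ζ) + (∫ ζ in x..(4*(n:ℝ)+3), nfAux ζ)
        = ∫ ζ in (0:ℝ)..(4*(n:ℝ)+3), nfAux ζ :=
      intervalIntegral.integral_add_adjacent_intervals (nfAux_int _ _) (nfAux_int _ _)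
    obtain ⟨habs1, habs2⟩ := abs_le.1 htail
    have hcv : -(|c| * (x + 2)) ≤ c * (4*(n:ℝ)+3) := by
      have := mul_le_mul_of_nonneg_right (neg_abs_le c) hv.le
      have hxv : 4*(n:ℝ)+3 = x + 2 := by rw [hxdef]; ring
      rw [hxv] at this ⊢
      linarith
    linarith
end

section
/- Let e : ℝ → ℝ be a twice continuously differentiable function and γ > 0. Define Ψ(t) = 2γ e(t) + γ² ∫₀ᵗ e(ρ)dρ + e'(t). If Ψ(t) → 0 as t → ∞ and Ψ is bounded, then e(t) → 0 and e'(t) → 0 as t → ∞. -/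
/-!
With `E t = ∫₀ᵗ e`, the hypothesis says `Ψ = (d/dt + γ) v` for `v = e + γ E`, and
`v = (d/dt + γ) E`. So it suffices that `f' + γ f → 0` forces `f → 0`, which holds because
`|f' + γ f| ≤ ε` on `[T, ∞)` gives, by comparing `e^{γt} f t` with `ε e^{γt} / γ`, the bound
`|f t| ≤ e^{-γ(t - T)} |f T| + ε / γ`. Applying this first to `v` and then to `E` yields
`E → 0` and `e → 0`, and `e' → 0` is then read off from the formula for `Ψ`.
-/

open Filter Real Topology

theorem abs_le_exp_mul_abs_add_of_abs_deriv_add_mul_le {f f' : ℝ → ℝ} {γ ε T : ℝ} (hγ : 0 < γ)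
    (hf : ∀ s ≥ T, HasDerivAt f (f' s) s) (hε : ∀ s ≥ T, |f' s + γ * f s| ≤ ε)
    {t : ℝ} (ht : T ≤ t) : |f t| ≤ exp (-(γ * (t - T))) * |f T| + ε / γ := by
  have hexp : ∀ s, HasDerivAt (fun u => exp (γ * u)) (exp (γ * s) * γ) s := fun s => by
    simpa using ((hasDerivAt_id s).const_mul γ).exp
  have hφ : ∀ s ≥ T, HasDerivAt (fun u => exp (γ * u) * f u)
      (exp (γ * s) * (f' s + γ * f s)) s := fun s hs =>
    ((hexp s).fun_mul (hf s hs)).congr_deriv (by ring)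
  have hB : ∀ s, HasDerivAt (fun u => exp (γ * T) * |f T| + ε / γ * exp (γ * u))
      (ε * exp (γ * s)) s := fun s =>
    (((hexp s).const_mul (ε / γ)).const_add (exp (γ * T) * |f T|)).congr_deriv
      (by field_simp)
  have key := image_norm_le_of_norm_deriv_right_le_deriv_boundary
    (fun s hs => (hφ s hs.1).continuousAt.continuousWithinAt)
    (fun s hs => (hφ s hs.1).hasDerivWithinAt) ?_ hB
    (fun s hs => ?_) ⟨ht, le_rfl⟩ (a := T) (b := t)
  · simp only [Real.norm_eq_abs, abs_mul, abs_exp] at key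
    rw [← le_div_iff₀' (exp_pos _), add_div, mul_div_right_comm, mul_div_assoc,
      div_self (exp_pos _).ne', ← exp_sub] at key
    rwa [mul_one, show γ * T - γ * t = -(γ * (t - T)) by ring] at key
  · have hε0 : 0 ≤ ε := (abs_nonneg _).trans (hε T le_rfl)
    simp only [Real.norm_eq_abs, abs_mul, abs_exp]
    have : 0 ≤ ε / γ * exp (γ * T) := by positivity
    linarith
  · simp only [Real.norm_eq_abs, abs_mul, abs_exp]
    rw [mul_comm ε]
    exact mul_le_mul_of_nonneg_left (hε s hs.1) (exp_pos _).le

theorem tendsto_zero_of_tendsto_deriv_add_mul {f f' : ℝ → ℝ} {γ : ℝ} (hγ : 0 < γ)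
    (hf : ∀ t, HasDerivAt f (f' t) t) (h : Tendsto (fun t => f' t + γ * f t) atTop (𝓝 0)) :
    Tendsto f atTop (𝓝 0) := by
  rw [Metric.tendsto_atTop] at h ⊢
  intro ε hε
  obtain ⟨T, hT⟩ := h (γ * ε / 2) (by positivity)
  have hdecay : Tendsto (fun t => exp (-(γ * (t - T))) * |f T|) atTop (𝓝 0) := by
    simpa [sub_eq_add_neg] using (tendsto_exp_neg_atTop_nhds_zero.comp
      ((tendsto_id.atTop_add tendsto_const_nhds).const_mul_atTop hγ)).mul_const |f T|
  obtain ⟨T', hT'⟩ := Metric.tendsto_atTop.1 hdecay (ε / 2) (by positivity)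
  refine ⟨max T T', fun t ht => ?_⟩
  have hbound := abs_le_exp_mul_abs_add_of_abs_deriv_add_mul_le hγ (fun s _ => hf s)
    (fun s hs => by simpa using (hT s hs).le) (le_of_max_le_left ht)
  have hsmall := hT' t (le_of_max_le_right ht)
  rw [Real.dist_eq, sub_zero, abs_of_nonneg (by positivity)] at hsmall
  rw [Real.dist_eq, sub_zero]
  calc |f t| ≤ exp (-(γ * (t - T))) * |f T| + γ * ε / 2 / γ := hbound
    _ = exp (-(γ * (t - T))) * |f T| + ε / 2 := by field_simp
    _ < ε := by linarith

theorem stmt3_general (e Ψ : ℝ → ℝ) (γ : ℝ) (hγ : 0 < γ) (he : ContDiff ℝ 2 e)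
    (hΨ : ∀ t, Ψ t = 2 * γ * e t + γ ^ 2 * (∫ ρ in (0:ℝ)..t, e ρ) + deriv e t)
    (hlim : Tendsto Ψ atTop (nhds 0)) :
    Tendsto e atTop (nhds 0) ∧ Tendsto (deriv e) atTop (nhds 0) := by
  set E : ℝ → ℝ := fun t => ∫ ρ in (0:ℝ)..t, e ρ
  have hE : ∀ t, HasDerivAt E (e t) t := fun t =>
    (he.continuous.integral_hasStrictDerivAt 0 t).hasDerivAt
  have hv : ∀ t, HasDerivAt (fun t => e t + γ * E t) (deriv e t + γ * e t) t := fun t =>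
    ((he.differentiable two_ne_zero t).hasDerivAt).add ((hE t).const_mul γ)
  have hv_lim : Tendsto (fun t => e t + γ * E t) atTop (𝓝 0) :=
    tendsto_zero_of_tendsto_deriv_add_mul hγ hv
      (hlim.congr fun t => by rw [hΨ t]; ring)
  have hE_lim : Tendsto E atTop (𝓝 0) := tendsto_zero_of_tendsto_deriv_add_mul hγ hE hv_lim
  have he_lim : Tendsto e atTop (𝓝 0) := by
    simpa using hv_lim.sub (hE_lim.const_mul γ)
  refine ⟨he_lim, ?_⟩
  have h := (hlim.sub (he_lim.const_mul (2 * γ))).sub (hE_lim.const_mul (γ ^ 2))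
  rw [mul_zero, mul_zero, sub_zero, sub_zero] at h
  exact h.congr fun t => by rw [hΨ t]; ring

/-- Lemma 1: if `Ψ(t) = 2γe(t) + γ²∫₀ᵗe + e'(t)` tends to `0` at infinity and is
bounded, then `e(t) → 0` and `e'(t) → 0` as `t → ∞`. -/
theorem stmt3 (e Ψ : ℝ → ℝ) (γ : ℝ) (hγ : 0 < γ) (he : ContDiff ℝ 2 e)
    (hΨ : ∀ t, Ψ t = 2 * γ * e t + γ ^ 2 * (∫ ρ in (0:ℝ)..t, e ρ) + deriv e t)
    (hlim : Tendsto Ψ atTop (nhds 0)) (hbd : ∃ B, ∀ t, |Ψ t| ≤ B) :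
    Tendsto e atTop (nhds 0) ∧ Tendsto (deriv e) atTop (nhds 0) :=
  stmt3_general e Ψ γ hγ he hΨ hlim
end
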